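/- If a finite simple graph Γ satisfies A(Γ;x) = A(P_t;x) for some t ≥ 2, then Γ is isomorphic to the path graph P_t. -/

import Mathlib

open Finset Polynomial
open scoped Classical

noncomputable section

variable {V : Type*} [Fintype V]

/-- Number of neighbors of `v` inside `S` (as an integer). -/
def degIn (G : SimpleGraph V) (S : Finset V) (v : V) : ℤ :=
  ((S.filter (fun u => G.Adj v u)).card : ℤ)

/-- Number of neighbors of `v` outside `S` (as an integer). -/
def degOut (G : SimpleGraph V) (S : Finset V) (v : V) : ℤ :=
  ((Sᶜ.filter (fun u => G.Adj v u)).card : ℤ)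

/-- The exact index of alliance of `S`. -/
def exactIndex (G : SimpleGraph V) (S : Finset V) : ℤ :=
  if h : S.Nonempty then S.inf' h (fun v => degIn G S v - degOut G S v) else 0

/-- Nonempty vertex subsets inducing a connected subgraph. -/
def goodSets (G : SimpleGraph V) : Finset (Finset V) :=
  Finset.univ.filter (fun S => S.Nonempty ∧ (G.induce (S : Set V)).Connected)

/-- The alliance polynomial. -/
def alliancePoly (G : SimpleGraph V) : Polynomial ℤ :=
  ∑ S ∈ goodSets G, X ^ (((Fintype.card V : ℤ) + exactIndex G S).toNat)

/-- `A_k(Γ)`: number of connected exact defensive `k`-alliances. -/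
def allianceCount (G : SimpleGraph V) (k : ℤ) : ℕ :=
  ((goodSets G).filter (fun S => exactIndex G S = k)).card

end

/-!
The coefficient of `x ^ (|V| + k)` in `A(Γ; x)` counts the connected sets of exact index `k`.
If every vertex has degree at most `D`, a connected set with at least two vertices has index
at least `2 - D`, so the two lowest exponents of `A(P_t; x)`, namely `t - 2` and `t - 1`, are
contributed by singletons alone and count the vertices of degree `2` and `1`. Transferring this
to `Γ` shows that `Γ` has `t - 2` vertices of degree `|Γ| - t + 2` and two of degree
`|Γ| - t + 1`, hence `|Γ| ≥ t`; a component of `Γ` without isolated vertices has exact index at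
least `1`, which the top exponent `t + 1` only allows when `|Γ| = t`. Then every degree is `1`
or `2`, every component has exact index `1`, and since the whole path is the only connected
`1`-alliance of `P_t`, `Γ` is connected. Finally, a connected graph of maximum degree `2` with a
leaf is a path: a longest path starting at the leaf is Hamiltonian and carries every edge.
-/

section

open SimpleGraph

variable {V : Type*} [Fintype V] {G : SimpleGraph V} {S : Finset V} {v : V}

lemma mem_goodSets : S ∈ goodSets G ↔ S.Nonempty ∧ (G.induce (S : Set V)).Connected := by
  simp [goodSets]

lemma degIn_add_degOut (G : SimpleGraph V) (S : Finset V) (v : V) :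
    degIn G S v + degOut G S v = G.degree v := by
  rw [degIn, degOut, ← Nat.cast_add, ← card_union_of_disjoint
    (disjoint_filter_filter disjoint_compl_right), ← filter_union, union_compl,
    ← card_neighborFinset_eq_degree, neighborFinset_eq_filter]

lemma exactIndex_le (hv : v ∈ S) : exactIndex G S ≤ degIn G S v - degOut G S v := by
  rw [exactIndex, dif_pos ⟨v, hv⟩]
  exact inf'_le _ hv

lemma le_exactIndex (hS : S.Nonempty) {c : ℤ}
    (h : ∀ v ∈ S, c ≤ degIn G S v - degOut G S v) :
    c ≤ exactIndex G S := by
  rw [exactIndex, dif_pos hS]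
  exact le_inf' _ _ h

lemma exactIndex_singleton (G : SimpleGraph V) (v : V) : exactIndex G {v} = -G.degree v := by
  have hIn : degIn G {v} v = 0 := by simp [degIn, filter_singleton]
  have hsum := degIn_add_degOut G {v} v
  rw [exactIndex, dif_pos (singleton_nonempty v), inf'_singleton]
  omega

lemma singleton_mem_goodSets (G : SimpleGraph V) (v : V) : {v} ∈ goodSets G := by
  rw [mem_goodSets, coe_singleton]
  exact ⟨singleton_nonempty v, (induce_singleton_eq_top G v).symm ▸ connected_top⟩

lemma one_sub_card_le_exactIndex (hS : S.Nonempty) :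
    1 - (Fintype.card V : ℤ) ≤ exactIndex G S := by
  refine le_exactIndex hS fun v _ => ?_
  have hOut := card_le_card (filter_subset (fun u => G.Adj v u) Sᶜ)
  have hS' := hS.card_pos
  rw [card_compl] at hOut
  have := S.card_le_univ
  simp only [degIn, degOut]
  omega

lemma coeff_alliancePoly (G : SimpleGraph V) (e : ℕ) :
    (alliancePoly G).coeff e = allianceCount G (e - Fintype.card V) := by
  rw [alliancePoly, finsetSum_coeff, allianceCount]
  simp_rw [coeff_X_pow]
  rw [sum_boole]
  congr 2
  refine filter_congr fun S hS => ?_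
  have := one_sub_card_le_exactIndex (G := G) (mem_goodSets.1 hS).1
  omega

lemma allianceCount_eq_zero_of_lt {k : ℤ} (hk : k < 1 - Fintype.card V) :
    allianceCount G k = 0 := by
  refine card_eq_zero.2 (filter_eq_empty_iff.2 fun S hS hSk => ?_)
  have := one_sub_card_le_exactIndex (G := G) (mem_goodSets.1 hS).1
  omega

lemma allianceCount_eq_of_alliancePoly_eq {W : Type*} [Fintype W] {H : SimpleGraph W}
    (h : alliancePoly G = alliancePoly H) (k : ℤ) :
    allianceCount G k = allianceCount H (k + (Fintype.card V - Fintype.card W)) := by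
  rcases lt_or_ge (k + Fintype.card V) 0 with hk | hk
  · rw [allianceCount_eq_zero_of_lt (by omega), allianceCount_eq_zero_of_lt (by omega)]
  · have := congrArg (coeff · (k + Fintype.card V).toNat) h
    simp only [coeff_alliancePoly] at this
    convert (Nat.cast_inj (R := ℤ)).1 this using 2 <;> omega

lemma neg_le_exactIndex {D : ℤ} (hD : ∀ v, (G.degree v : ℤ) ≤ D) (hS : S.Nonempty) :
    -D ≤ exactIndex G S := by
  refine le_exactIndex hS fun v _ => ?_
  have := degIn_add_degOut G S v
  have := hD v
  have : 0 ≤ degIn G S v := Int.natCast_nonneg _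
  omega

lemma exists_adj_of_mem_goodSets (hS : S ∈ goodSets G) (hcard : 2 ≤ #S) (hv : v ∈ S) :
    ∃ w ∈ S, G.Adj v w := by
  have : Nontrivial (S : Set V) := Finset.one_lt_card_iff_nontrivial.1 hcard |>.coe_sort
  obtain ⟨w, hw⟩ := (mem_goodSets.1 hS).2.preconnected.exists_adj_of_nontrivial ⟨v, hv⟩
  exact ⟨w, w.2, hw⟩

lemma two_sub_le_exactIndex {D : ℤ} (hD : ∀ v, (G.degree v : ℤ) ≤ D) (hS : S ∈ goodSets G)
    (hcard : 2 ≤ #S) : 2 - D ≤ exactIndex G S := by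
  refine le_exactIndex (mem_goodSets.1 hS).1 fun v hv => ?_
  obtain ⟨w, hw, hvw⟩ := exists_adj_of_mem_goodSets hS hcard hv
  have : 1 ≤ degIn G S v := by
    simp only [degIn, Nat.one_le_cast, one_le_card]
    exact ⟨w, mem_filter.2 ⟨hw, hvw⟩⟩
  have := degIn_add_degOut G S v
  have := hD v
  omega

lemma allianceCount_eq_card_degree {k : ℤ}
    (hk : ∀ S ∈ goodSets G, 2 ≤ #S → k < exactIndex G S) :
    allianceCount G k = #{v | (G.degree v : ℤ) = -k} := by
  symm
  refine card_bij (fun v _ => {v}) (fun v hv => ?_) (fun _ _ _ _ h => singleton_injective h)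
    fun S hS => ?_
  · simp only [mem_filter, mem_univ, true_and] at hv
    simp only [mem_filter, singleton_mem_goodSets, exactIndex_singleton, true_and]
    omega
  · obtain ⟨hSg, hSk⟩ := mem_filter.1 hS
    obtain ⟨v, rfl⟩ : ∃ v, S = {v} := by
      refine card_eq_one.1 (le_antisymm (not_lt.1 fun hcard => ?_) (mem_goodSets.1 hSg).1.card_pos)
      exact (hk S hSg hcard).ne' hSk
    refine ⟨v, ?_, rfl⟩
    simp only [mem_filter, mem_univ, true_and]
    rw [exactIndex_singleton] at hSk
    omega

lemma supp_toFinset_mem_goodSets (C : G.ConnectedComponent) : C.supp.toFinset ∈ goodSets G := by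
  rw [mem_goodSets, Set.coe_toFinset, Set.toFinset_nonempty]
  exact ⟨C.nonempty_supp, (ConnectedComponent.maximal_connected_induce_supp C).prop⟩

lemma le_exactIndex_supp_toFinset (C : G.ConnectedComponent) {c : ℤ}
    (h : ∀ v ∈ C.supp, c ≤ G.degree v) : c ≤ exactIndex G C.supp.toFinset := by
  refine le_exactIndex (Set.toFinset_nonempty.2 C.nonempty_supp) fun v hv => ?_
  rw [Set.mem_toFinset] at hv
  have hOut : degOut G C.supp.toFinset v = 0 := by
    simp only [degOut, Nat.cast_eq_zero, card_eq_zero, filter_eq_empty_iff, mem_compl,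
      Set.mem_toFinset]
    exact fun w hw hvw => hw (C.mem_supp_of_adj_mem_supp hv hvw)
  have := degIn_add_degOut G C.supp.toFinset v
  have := h v hv
  omega

namespace SimpleGraph

/-- These are exactly the graphs isomorphic to `pathGraph n` with `n ≥ 2`. -/
structure IsPathLike (G : SimpleGraph V) : Prop where
  connected : G.Connected
  degree_le_two : ∀ v, G.degree v ≤ 2
  exists_degree_eq_one : ∃ v, G.degree v = 1

namespace IsPathLike

variable (hG : G.IsPathLike)
include hG

lemma one_le_degree (v : V) : 1 ≤ G.degree v := by
  obtain ⟨w, hw⟩ := hG.exists_degree_eq_one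
  obtain ⟨u, hwu⟩ := (G.degree_pos_iff_exists_adj w).1 (hw ▸ Nat.one_pos)
  have : Nontrivial V := nontrivial_of_ne w u hwu.ne
  exact hG.connected.preconnected.degree_pos_of_nontrivial v

lemma exactIndex_nonpos (hS : S.Nonempty) (hSu : S ≠ univ) : exactIndex G S ≤ 0 := by
  obtain ⟨a, ha⟩ := hS
  obtain ⟨b, hb⟩ := not_forall.1 fun h => hSu (eq_univ_of_forall h)
  obtain ⟨p⟩ := hG.connected.preconnected a b
  obtain ⟨d, -, hd, hd'⟩ := p.exists_boundary_dart S ha hb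
  have hOut : 1 ≤ degOut G S d.fst := by
    simp only [degOut, Nat.one_le_cast, one_le_card]
    exact ⟨d.snd, mem_filter.2 ⟨mem_compl.2 hd', d.adj⟩⟩
  have := exactIndex_le (G := G) hd
  have := degIn_add_degOut G S d.fst
  have := hG.degree_le_two d.fst
  omega

lemma exactIndex_le_one (hS : S.Nonempty) : exactIndex G S ≤ 1 := by
  rcases eq_or_ne S univ with rfl | hSu
  · obtain ⟨w, hw⟩ := hG.exists_degree_eq_one
    have := exactIndex_le (G := G) (mem_univ w)
    have := degIn_add_degOut G univ w
    have : 0 ≤ degOut G univ w := Int.natCast_nonneg _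
    omega
  · linarith [hG.exactIndex_nonpos hS hSu]

lemma mem_Icc_of_allianceCount_ne_zero {k : ℤ} (hk : allianceCount G k ≠ 0) :
    -2 ≤ k ∧ k ≤ 1 := by
  obtain ⟨S, hS⟩ := nonempty_of_ne_empty (card_ne_zero.1 hk).ne_empty
  obtain ⟨hSg, rfl⟩ := mem_filter.1 hS
  have hne := (mem_goodSets.1 hSg).1
  exact ⟨neg_le_exactIndex (fun v => by exact_mod_cast hG.degree_le_two v) hne,
    hG.exactIndex_le_one hne⟩

lemma allianceCount_one_le : allianceCount G 1 ≤ 1 := by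
  refine card_le_one.2 fun S hS T hT => ?_
  have key : ∀ S ∈ (goodSets G).filter (exactIndex G · = 1), S = univ := by
    intro S hS
    obtain ⟨hSg, hS1⟩ := mem_filter.1 hS
    by_contra hSu
    linarith [hG.exactIndex_nonpos (mem_goodSets.1 hSg).1 hSu]
  rw [key S hS, key T hT]

lemma card_degree_eq_one_add_card_degree_eq_two :
    #{v | (G.degree v : ℤ) = 1} + #{v | (G.degree v : ℤ) = 2} = Fintype.card V := by
  rw [← card_univ,
    ← card_filter_add_card_filter_not (s := univ) fun v => (G.degree v : ℤ) = 1]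
  congr 2
  refine filter_congr fun v _ => ?_
  have := hG.one_le_degree v
  have := hG.degree_le_two v
  omega

lemma card_degree_eq_one_pos : 0 < #{v | (G.degree v : ℤ) = 1} := by
  obtain ⟨w, hw⟩ := hG.exists_degree_eq_one
  exact card_pos.2 ⟨w, by simp [hw]⟩

end IsPathLike

end SimpleGraph

section AlliancePolyEqPathLike

variable {W : Type*} [Fintype W] {H : SimpleGraph W} (hH : H.IsPathLike)
  (h : alliancePoly G = alliancePoly H)
include hH h

lemma exactIndex_mem_of_alliancePoly_eq (hS : S ∈ goodSets G) :
    -2 ≤ exactIndex G S + (Fintype.card V - Fintype.card W) ∧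
      exactIndex G S + (Fintype.card V - Fintype.card W) ≤ 1 := by
  refine hH.mem_Icc_of_allianceCount_ne_zero ?_
  rw [← allianceCount_eq_of_alliancePoly_eq h]
  exact card_ne_zero_of_mem (mem_filter.2 ⟨hS, rfl⟩)

lemma degree_le_of_alliancePoly_eq (v : V) :
    (G.degree v : ℤ) ≤ Fintype.card V - Fintype.card W + 2 := by
  have := (exactIndex_mem_of_alliancePoly_eq hH h (singleton_mem_goodSets G v)).1
  rw [exactIndex_singleton] at this
  omega

lemma card_degree_eq_of_alliancePoly_eq {j : ℤ} (hj : 1 ≤ j) :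
    #{v | (G.degree v : ℤ) = j + (Fintype.card V - Fintype.card W)} =
      #{w | (H.degree w : ℤ) = j} := by
  have hcountG := allianceCount_eq_card_degree (G := G)
    (k := -(j + (Fintype.card V - Fintype.card W))) fun S hS hcard => by
      have := two_sub_le_exactIndex (degree_le_of_alliancePoly_eq hH h) hS hcard
      omega
  have hcountH := allianceCount_eq_card_degree (G := H) (k := -j) fun S hS hcard => by
    have := two_sub_le_exactIndex (D := 2) (fun w => by exact_mod_cast hH.degree_le_two w) hS hcard
    omega
  rw [neg_neg] at hcountG hcountH
  rw [← hcountG, ← hcountH, allianceCount_eq_of_alliancePoly_eq h]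
  congr 1
  ring

lemma card_le_card_of_alliancePoly_eq : Fintype.card W ≤ Fintype.card V := by
  have hdisj : Disjoint
      (univ.filter fun v => (G.degree v : ℤ) = 1 + (Fintype.card V - Fintype.card W))
      (univ.filter fun v => (G.degree v : ℤ) = 2 + (Fintype.card V - Fintype.card W)) :=
    disjoint_filter.2 fun v _ h1 h2 => by omega
  have := (card_union_of_disjoint hdisj).symm.trans_le (card_le_univ _)
  rw [card_degree_eq_of_alliancePoly_eq hH h le_rfl,
    card_degree_eq_of_alliancePoly_eq hH h one_le_two,
    hH.card_degree_eq_one_add_card_degree_eq_two] at this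
  exact this

/-- A vertex of degree `1 + (|V| - |W|)` lies in a component all of whose vertices have positive
degree, so that component has exact index at least `1`; this bounds the shift from above. -/
lemma card_eq_card_of_alliancePoly_eq : Fintype.card V = Fintype.card W := by
  refine le_antisymm ?_ (card_le_card_of_alliancePoly_eq hH h)
  by_contra! hlt
  obtain ⟨v, hv⟩ := card_pos.1 <|
    (card_degree_eq_of_alliancePoly_eq hH h le_rfl).symm ▸ hH.card_degree_eq_one_pos
  simp only [mem_filter, mem_univ, true_and] at hv
  let C := G.connectedComponentMk v
  have hpos : ∀ u ∈ C.supp, (1 : ℤ) ≤ G.degree u := fun u hu => by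
    rcases eq_or_ne v u with rfl | hvu
    · omega
    · exact_mod_cast (ConnectedComponent.exact ((C.mem_supp_iff u).1 hu)).degree_pos_left hvu.symm
  have := le_exactIndex_supp_toFinset C hpos
  have := (exactIndex_mem_of_alliancePoly_eq hH h (supp_toFinset_mem_goodSets C)).2
  omega

lemma card_degree_eq_of_alliancePoly_eq' {j : ℤ} (hj : 1 ≤ j) :
    #{v | (G.degree v : ℤ) = j} = #{w | (H.degree w : ℤ) = j} := by
  simpa [card_eq_card_of_alliancePoly_eq hH h] using card_degree_eq_of_alliancePoly_eq hH h hj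

lemma degree_eq_one_or_two_of_alliancePoly_eq (v : V) : G.degree v = 1 ∨ G.degree v = 2 := by
  have hdisj : Disjoint (univ.filter fun v => (G.degree v : ℤ) = 1)
      (univ.filter fun v => (G.degree v : ℤ) = 2) :=
    disjoint_filter.2 fun v _ h1 h2 => by omega
  have hcover := eq_univ_of_card _ <| by
    rw [card_union_of_disjoint hdisj, card_degree_eq_of_alliancePoly_eq' hH h le_rfl,
      card_degree_eq_of_alliancePoly_eq' hH h one_le_two,
      hH.card_degree_eq_one_add_card_degree_eq_two, card_eq_card_of_alliancePoly_eq hH h]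
  have hv := hcover ▸ mem_univ v
  simp only [mem_union, mem_filter, mem_univ, true_and] at hv
  omega

/-- Every component has exact index `1`, and `H` has only one connected `1`-alliance. -/
lemma preconnected_of_alliancePoly_eq : G.Preconnected := by
  have hcard := card_eq_card_of_alliancePoly_eq hH h
  have hmem : ∀ C : G.ConnectedComponent,
      C.supp.toFinset ∈ (goodSets G).filter (exactIndex G · = 1) := fun C => by
    have := le_exactIndex_supp_toFinset (c := 1) C fun u _ => by
      have := degree_eq_one_or_two_of_alliancePoly_eq hH h u
      omega
    have := (exactIndex_mem_of_alliancePoly_eq hH h (supp_toFinset_mem_goodSets C)).2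
    exact mem_filter.2 ⟨supp_toFinset_mem_goodSets C, by omega⟩
  have hone : allianceCount G 1 ≤ 1 := by
    simpa [allianceCount_eq_of_alliancePoly_eq h, hcard] using hH.allianceCount_one_le
  intro u w
  apply ConnectedComponent.exact
  exact ConnectedComponent.supp_injective <| Set.toFinset_inj.1 <|
    card_le_one.1 hone _ (hmem _) _ (hmem _)

lemma SimpleGraph.IsPathLike.of_alliancePoly_eq : G.IsPathLike := by
  have hcard := card_eq_card_of_alliancePoly_eq hH h
  have : Nonempty V :=
    Fintype.card_pos_iff.1 (hcard ▸ Fintype.card_pos_iff.2 hH.connected.nonempty)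
  refine ⟨⟨preconnected_of_alliancePoly_eq hH h⟩, fun v => ?_, ?_⟩
  · have := degree_eq_one_or_two_of_alliancePoly_eq hH h v
    omega
  · obtain ⟨v, hv⟩ := card_pos.1 <|
      (card_degree_eq_of_alliancePoly_eq' hH h le_rfl).symm ▸ hH.card_degree_eq_one_pos
    exact ⟨v, by simpa using hv⟩

end AlliancePolyEqPathLike

namespace SimpleGraph

lemma Walk.IsPath.toSubgraph_neighborSet_eq {u w x : V} {p : G.Walk u w} (hp : p.IsPath)
    (hdeg : ∀ v, G.degree v ≤ 2) (hu : G.degree u = 1) (hx : x ∈ p.support) (hxw : x ≠ w) :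
    p.toSubgraph.neighborSet x = G.neighborSet x := by
  obtain ⟨i, rfl, hi⟩ := p.mem_support_iff_exists_getVert.1 hx
  have hil : i < p.length := hi.lt_of_ne fun h => hxw (h ▸ p.getVert_length)
  refine Set.eq_of_subset_of_ncard_le (p.toSubgraph.neighborSet_subset _) ?_ (Set.toFinite _)
  rw [← coe_neighborFinset, Set.ncard_coe_finset, card_neighborFinset_eq_degree]
  rcases eq_or_ne i 0 with rfl | hi0
  · rw [p.getVert_zero] at hxw ⊢
    rw [hp.neighborSet_toSubgraph_startpoint (p.not_nil_of_ne hxw), Set.ncard_singleton, hu]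
  · rw [hp.ncard_neighborSet_toSubgraph_internal_eq_two hi0 hil]
    exact hdeg _

lemma exists_isHamiltonian_of_degree_le_two (hconn : G.Connected) (hdeg : ∀ v, G.degree v ≤ 2)
    {u : V} (hu : G.degree u = 1) : ∃ (w : V) (p : G.Walk u w), p.IsHamiltonian := by
  let P k := ∃ (w : V) (p : G.Walk u w), p.IsPath ∧ p.length = k
  obtain ⟨w, p, hp, hlen⟩ : P (Nat.findGreatest P (Fintype.card V)) :=
    Nat.findGreatest_spec (Nat.zero_le _) ⟨u, .nil, .nil, rfl⟩
  refine ⟨w, p, hp.isHamiltonian_of_mem fun y => ?_⟩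
  by_contra hy
  obtain ⟨q⟩ := hconn.preconnected u y
  obtain ⟨d, -, hd, hd'⟩ := q.exists_boundary_dart {v | v ∈ p.support} p.start_mem_support hy
  by_cases hdw : d.fst = w
  · have hp' := hp.concat hd' (hdw ▸ d.adj)
    have := Nat.le_findGreatest (P := P) hp'.length_lt.le ⟨_, _, hp', rfl⟩
    simp only [Walk.length_concat] at this
    omega
  · have hadj : d.snd ∈ p.toSubgraph.neighborSet d.fst := by
      rw [hp.toSubgraph_neighborSet_eq hdeg hu hd hdw]
      exact d.adj
    exact hd' (p.mem_verts_toSubgraph.1 hadj.snd_mem)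

lemma Walk.IsHamiltonian.toSubgraph_eq_top {u w : V} {p : G.Walk u w} (hp : p.IsHamiltonian)
    (hdeg : ∀ v, G.degree v ≤ 2) (hu : G.degree u = 1) : p.toSubgraph = ⊤ := by
  have hnbr {a : V} (ha : a ≠ w) : p.toSubgraph.neighborSet a = G.neighborSet a :=
    hp.isPath.toSubgraph_neighborSet_eq hdeg hu (hp.mem_support a) ha
  refine Subgraph.ext (by simp [hp.mem_support]) ?_
  ext a b
  refine ⟨fun h => p.toSubgraph.adj_sub h, fun hab => ?_⟩
  by_cases ha : a = w
  · have hb : b ≠ w := ha ▸ hab.ne.symm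
    exact (Set.ext_iff.1 (hnbr hb) a).2 hab.symm |>.symm
  · exact (Set.ext_iff.1 (hnbr ha) b).2 hab

lemma IsPathLike.nonempty_iso_pathGraph (hG : G.IsPathLike) :
    Nonempty (G ≃g pathGraph (Fintype.card V)) := by
  obtain ⟨u, hu⟩ := hG.exists_degree_eq_one
  obtain ⟨w, p, hp⟩ := exists_isHamiltonian_of_degree_le_two hG.connected hG.degree_le_two hu
  have e := hp.isPath.pathGraphIsoToSubgraph
  rw [hp.toSubgraph_eq_top hG.degree_le_two hu, hp.length_eq,
    Nat.sub_add_cancel (Fintype.card_pos_iff.2 ⟨u⟩)] at e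
  exact ⟨(Subgraph.topIso.comp e).symm⟩

lemma degree_pathGraph_le_two {n : ℕ} (i : Fin n) : (pathGraph n).degree i ≤ 2 := by
  rw [← card_neighborFinset_eq_degree]
  refine (card_le_card_of_injOn (fun j => decide (j < i)) (fun _ _ => mem_univ _) ?_).trans
    (card_univ (α := Bool)).le
  intro a ha b hb hab
  simp only [coe_neighborFinset, mem_neighborSet, pathGraph_adj] at ha hb
  simp only [decide_eq_decide, Fin.lt_def] at hab
  omega

lemma degree_pathGraph_zero (n : ℕ) : (pathGraph (n + 2)).degree 0 = 1 := by
  rw [← card_neighborFinset_eq_degree, card_eq_one]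
  refine ⟨1, ext fun j => ?_⟩
  simp only [mem_neighborFinset, pathGraph_adj, mem_singleton, Fin.ext_iff, Fin.val_zero,
    Fin.val_one]
  omega

lemma isPathLike_pathGraph (n : ℕ) : (pathGraph (n + 2)).IsPathLike :=
  ⟨pathGraph_connected _, degree_pathGraph_le_two, ⟨0, degree_pathGraph_zero n⟩⟩

end SimpleGraph

end

/-- path graphs are characterized by their alliance polynomials. -/
theorem eq_pathGraph_of_alliancePoly {V : Type*} [Fintype V] (G : SimpleGraph V)
    (t : ℕ) (ht : 2 ≤ t)
    (h : alliancePoly G = alliancePoly (SimpleGraph.pathGraph t)) :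
    Nonempty (G ≃g SimpleGraph.pathGraph t) := by
  obtain ⟨n, rfl⟩ := Nat.exists_eq_add_of_le' ht
  have hP := SimpleGraph.isPathLike_pathGraph n
  have hcard := card_eq_card_of_alliancePoly_eq hP h
  rw [Fintype.card_fin] at hcard
  exact hcard ▸ (hP.of_alliancePoly_eq h).nonempty_iso_pathGraph
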